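/- Characterization of PNE for lazy voters under randomized tie-breaking: the game (Lazy, R, u) with R ∈ {random candidate, random voter} admits a PNE if and only if (1) all voters share the same top candidate, or (2) each candidate is ranked first by at most one voter and for each voter ℓ, the average (1/n)Σ_{i∈N} u_ℓ(a_i) is at least max_{i≠ℓ} u_ℓ(a_i), or (3) there exists a set X of k candidates with 2 ≤ k ≤ min(n/2, m) and a partition of voters into k groups of size n/k each, such that each voter in group j ranks the j-th candidate of X above all other members of X, and prefers the uniform lottery over X to her second-favorite member of X winning outright. -/

import Mathlib

open Finset

/-- A ballot vector: each voter either abstains (`none`) or votes for a candidate. -/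
abbrev Ballot (n m : ℕ) := Fin n → Option (Fin m)

/-- The plurality score of candidate `c` under ballot vector `b`. -/
def sc {n m : ℕ} (b : Ballot n m) (c : Fin m) : ℕ :=
  (univ.filter fun i => b i = some c).card

/-- The maximum plurality score. -/
def maxScore {n m : ℕ} (b : Ballot n m) : ℕ :=
  univ.sup fun c : Fin m => sc b c

/-- The winning set `W(b)`: candidates with maximum score. -/
def winSet {n m : ℕ} (b : Ballot n m) : Finset (Fin m) :=
  univ.filter fun c => sc b c = maxScore b

/-- `H(b)`: candidates whose score is the maximum minus one. -/
def Hset {n m : ℕ} (b : Ballot n m) : Finset (Fin m) :=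
  univ.filter fun c => sc b c + 1 = maxScore b

/-- `H'(b)`: candidates whose score is the maximum minus two. -/
def H'set {n m : ℕ} (b : Ballot n m) : Finset (Fin m) :=
  univ.filter fun c => sc b c + 2 = maxScore b

/-- `c` is the winner under lexicographic tie-breaking: the minimum-index member of `W(b)`. -/
def IsLexWin {n m : ℕ} (b : Ballot n m) (c : Fin m) : Prop :=
  c ∈ winSet b ∧ ∀ c' ∈ winSet b, (c : ℕ) ≤ (c' : ℕ)

/-- The (degenerate) lottery induced by lexicographic tie-breaking. -/
def pLex {n m : ℕ} (b : Ballot n m) : Fin m → ℚ := fun c =>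
  if c ∈ winSet b ∧ ∀ c' ∈ winSet b, (c : ℕ) ≤ (c' : ℕ) then 1 else 0

/-- The lottery induced by random-candidate tie-breaking: uniform over `W(b)`. -/
def pRC {n m : ℕ} (b : Ballot n m) : Fin m → ℚ := fun c =>
  if c ∈ winSet b then ((winSet b).card : ℚ)⁻¹ else 0

/-- The lottery induced by random-voter tie-breaking: a uniformly random voter's
favourite member of `W(b)` is elected. -/
def pRV {n m : ℕ} (u : Fin n → Fin m → ℕ) (b : Ballot n m) : Fin m → ℚ := fun c =>
  ((univ.filter fun i : Fin n =>
      c ∈ winSet b ∧ ∀ c' ∈ winSet b, u i c' ≤ u i c).card : ℚ) / (n : ℚ)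

/-- Expected utility of a lottery `p` for a voter with utility function `ui`. -/
def EU {m : ℕ} (ui : Fin m → ℕ) (p : Fin m → ℚ) : ℚ := ∑ c, p c * (ui c : ℚ)

/-- Payoff of lazy voter `i`: expected utility plus a bonus `ε` for abstaining. -/
def lazyU {n m : ℕ} (p : Ballot n m → Fin m → ℚ) (u : Fin n → Fin m → ℕ)
    (ε : ℚ) (i : Fin n) (b : Ballot n m) : ℚ :=
  EU (u i) (p b) + if b i = none then ε else 0

/-- Pure Nash equilibrium of the lazy-voter game. -/
def lazyPNE {n m : ℕ} (p : Ballot n m → Fin m → ℚ) (u : Fin n → Fin m → ℕ)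
    (ε : ℚ) (b : Ballot n m) : Prop :=
  ∀ (i : Fin n) (b' : Option (Fin m)),
    lazyU p u ε i (Function.update b i b') ≤ lazyU p u ε i b

/-- View a non-abstaining (truth-biased) ballot vector as a general ballot vector. -/
def tv {n m : ℕ} (b : Fin n → Fin m) : Ballot n m := fun i => some (b i)

/-- Payoff of truth-biased voter `i`: expected utility plus a bonus `ε` for voting
truthfully (abstention, which would yield `-∞`, is never used). -/
def tbU {n m : ℕ} (p : Ballot n m → Fin m → ℚ) (u : Fin n → Fin m → ℕ)
    (a : Fin n → Fin m) (ε : ℚ) (i : Fin n) (b : Fin n → Fin m) : ℚ :=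
  EU (u i) (p (tv b)) + if b i = a i then ε else 0

/-- Pure Nash equilibrium of the truth-biased game. -/
def tbPNE {n m : ℕ} (p : Ballot n m → Fin m → ℚ) (u : Fin n → Fin m → ℕ)
    (a : Fin n → Fin m) (ε : ℚ) (b : Fin n → Fin m) : Prop :=
  ∀ (i : Fin n) (b' : Fin m),
    tbU p u a ε i (Function.update b i b') ≤ tbU p u a ε i b


section Infra

variable {n m : ℕ}

lemma sc_le_maxScore (b : Ballot n m) (c : Fin m) : sc b c ≤ maxScore b :=
  Finset.le_sup (Finset.mem_univ c)

lemma mem_winSet {b : Ballot n m} {c : Fin m} : c ∈ winSet b ↔ sc b c = maxScore b := by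
  simp [winSet]

lemma winSet_nonempty (hm : 0 < m) (b : Ballot n m) : (winSet b).Nonempty := by
  obtain ⟨c, -, hc⟩ := Finset.exists_mem_eq_sup (univ : Finset (Fin m))
    ⟨⟨0, hm⟩, mem_univ _⟩ (fun c => sc b c)
  exact ⟨c, mem_winSet.2 hc.symm⟩

lemma sc_update (b : Ballot n m) (i : Fin n) (v : Option (Fin m)) (c : Fin m) :
    sc (Function.update b i v) c + (if b i = some c then 1 else 0)
      = sc b c + (if v = some c then 1 else 0) := by
  classical
  have key : ∀ f : Fin n → Option (Fin m),
      (univ.filter fun j => f j = some c).card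
        = ((univ.filter fun j => f j = some c).erase i).card
            + (if f i = some c then 1 else 0) := by
    intro f
    by_cases h : f i = some c
    · rw [if_pos h, Finset.card_erase_add_one (by simp [h])]
    · rw [if_neg h, add_zero, Finset.erase_eq_of_notMem (by simp [h])]
  have herase : (univ.filter fun j => Function.update b i v j = some c).erase i
      = (univ.filter fun j => b j = some c).erase i := by
    ext j
    simp only [Finset.mem_erase, Finset.mem_filter, Finset.mem_univ, true_and]
    constructor
    · rintro ⟨hj, h⟩
      rw [Function.update_of_ne hj] at h
      exact ⟨hj, h⟩
    · rintro ⟨hj, h⟩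
      exact ⟨hj, by rw [Function.update_of_ne hj]; exact h⟩
  have e1 : sc (Function.update b i v) c
      = (univ.filter fun j => Function.update b i v j = some c).card := rfl
  have e2 : sc b c = (univ.filter fun j => b j = some c).card := rfl
  rw [e1, e2, key (Function.update b i v), key b, herase, Function.update_self]
  ring

lemma winSet_eq {b : Ballot n m} {S : Finset (Fin m)} {s : ℕ}
    (hS : S.Nonempty) (h1 : ∀ c ∈ S, sc b c = s) (h2 : ∀ c ∉ S, sc b c < s) :
    maxScore b = s ∧ winSet b = S := by
  obtain ⟨c0, hc0⟩ := hS
  have hmax : maxScore b = s := by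
    refine le_antisymm (Finset.sup_le fun c _ => ?_) ((h1 c0 hc0) ▸ sc_le_maxScore b c0)
    by_cases h : c ∈ S
    · exact le_of_eq (h1 c h)
    · exact (h2 c h).le
  refine ⟨hmax, ?_⟩
  ext c
  rw [mem_winSet, hmax]
  constructor
  · intro h
    by_contra hc
    exact absurd h (h2 c hc).ne
  · exact h1 c

lemma p_congr {p : Ballot n m → Fin m → ℚ} {u : Fin n → Fin m → ℕ}
    (hp : p = pRC ∨ p = pRV u) {b1 b2 : Ballot n m}
    (h : winSet b1 = winSet b2) : p b1 = p b2 := by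
  rcases hp with rfl | rfl
  · funext c; simp [pRC, h]
  · funext c; simp [pRV, h]

lemma EU_pRC {b : Ballot n m} {S : Finset (Fin m)} (hW : winSet b = S) (ul : Fin m → ℕ) :
    EU ul (pRC b) = (∑ c ∈ S, (ul c : ℚ)) / S.card := by
  rw [EU]
  simp only [pRC, hW, ite_mul, zero_mul]
  rw [Finset.sum_ite_mem, Finset.univ_inter, Finset.sum_div]
  refine Finset.sum_congr rfl fun c _ => ?_
  rw [div_eq_inv_mul]

lemma EU_pRV {u : Fin n → Fin m → ℕ} (hu : ∀ i, Function.Injective (u i))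
    {b : Ballot n m} {S : Finset (Fin m)} (hW : winSet b = S)
    (F : Fin n → Fin m) (hF1 : ∀ i, F i ∈ S) (hF2 : ∀ i, ∀ c ∈ S, u i c ≤ u i (F i))
    (ul : Fin m → ℕ) :
    EU ul (pRV u b) = (∑ i, (ul (F i) : ℚ)) / n := by
  classical
  have key : ∀ (i : Fin n) (c : Fin m),
      (c ∈ winSet b ∧ ∀ c' ∈ winSet b, u i c' ≤ u i c) ↔ F i = c := by
    intro i c
    rw [hW]
    constructor
    · rintro ⟨hc, hmax⟩
      exact (hu i (le_antisymm (hF2 i c hc) (hmax _ (hF1 i)))).symm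
    · rintro rfl
      exact ⟨hF1 i, fun c' hc' => hF2 i c' hc'⟩
  have h2 : ∀ c, pRV u b c = ((univ.filter fun i => F i = c).card : ℚ) / n := by
    intro c
    rw [pRV]
    congr 3
    exact Finset.filter_congr fun i _ => by
      constructor
      · exact fun h => (key i c).1 h
      · exact fun h => (key i c).2 h
  have h3 : (∑ i, (ul (F i) : ℚ)) = ∑ c, ((univ.filter fun i => F i = c).card : ℚ) * ul c := by
    rw [← Finset.sum_fiberwise_of_maps_to (fun i _ => Finset.mem_univ (F i))
      (fun i => (ul (F i) : ℚ))]
    refine Finset.sum_congr rfl fun c _ => ?_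
    have hc1 : ∀ i ∈ univ.filter (fun i => F i = c), (ul (F i) : ℚ) = (ul c : ℚ) :=
      fun i hi => by rw [(Finset.mem_filter.1 hi).2]
    rw [Finset.sum_congr rfl hc1, Finset.sum_const, nsmul_eq_mul]
  rw [EU, h3, Finset.sum_div]
  refine Finset.sum_congr rfl fun c _ => ?_
  rw [h2 c, div_mul_eq_mul_div]

end Infra
section Helpers

variable {n m : ℕ}

lemma sc_tv (g : Fin n → Fin m) (c : Fin m) :
    sc (fun i => some (g i)) c = (univ.filter fun i => g i = c).card := by
  unfold sc
  congr 1
  exact Finset.filter_congr fun i _ => by simp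

lemma sum_le_bound {S : Finset (Fin m)} {v : Fin m → ℕ} {B : ℚ}
    (h : ∀ c ∈ S, (v c : ℚ) ≤ B) : ∑ c ∈ S, (v c : ℚ) ≤ S.card * B := by
  calc ∑ c ∈ S, (v c : ℚ) ≤ ∑ _c ∈ S, B := Finset.sum_le_sum h
  _ = S.card * B := by rw [Finset.sum_const, nsmul_eq_mul]

lemma EU_p_singleton {p : Ballot n m → Fin m → ℚ} {u : Fin n → Fin m → ℕ}
    (hp : p = pRC ∨ p = pRV u) (hn : 0 < n) (hu : ∀ i, Function.Injective (u i))
    {b : Ballot n m} {c : Fin m} (hW : winSet b = {c}) (ul : Fin m → ℕ) :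
    EU ul (p b) = ul c := by
  rcases hp with rfl | rfl
  · rw [EU_pRC hW]
    simp
  · rw [EU_pRV hu hW (fun _ => c) (fun _ => Finset.mem_singleton_self c)
      (fun i c' hc' => by rw [Finset.mem_singleton.1 hc'])]
    rw [Finset.sum_const, nsmul_eq_mul, Finset.card_univ, Fintype.card_fin]
    have hn0 : (n : ℚ) ≠ 0 := by positivity
    field_simp

/-- Fiberwise sum identity. -/
lemma sum_comp {g : Fin n → Fin m} {X : Finset (Fin m)} {s : ℕ}
    (hgX : ∀ i, g i ∈ X)
    (hcnt : ∀ c ∈ X, (univ.filter fun i => g i = c).card = s) (ul : Fin m → ℕ) :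
    ∑ j : Fin n, (ul (g j) : ℚ) = s * ∑ c ∈ X, (ul c : ℚ) := by
  classical
  rw [← Finset.sum_fiberwise_of_maps_to (fun i _ => hgX i) (fun i => (ul (g i) : ℚ)),
    Finset.mul_sum]
  refine Finset.sum_congr rfl fun c hc => ?_
  have hc1 : ∀ i ∈ univ.filter (fun i => g i = c), (ul (g i) : ℚ) = (ul c : ℚ) :=
    fun i hi => by rw [(Finset.mem_filter.1 hi).2]
  rw [Finset.sum_congr rfl hc1, Finset.sum_const, nsmul_eq_mul, hcnt c hc]

lemma EU_p_uniform {p : Ballot n m → Fin m → ℚ} {u : Fin n → Fin m → ℕ}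
    (hp : p = pRC ∨ p = pRV u) (hn : 0 < n) (hu : ∀ i, Function.Injective (u i))
    {b : Ballot n m} {X : Finset (Fin m)} {s : ℕ} (hW : winSet b = X)
    {g : Fin n → Fin m} (hgX : ∀ i, g i ∈ X)
    (hg2 : ∀ i, ∀ c ∈ X, u i c ≤ u i (g i))
    (hcnt : ∀ c ∈ X, (univ.filter fun i => g i = c).card = s)
    (hks : X.card * s = n) (ul : Fin m → ℕ) :
    EU ul (p b) = (∑ c ∈ X, (ul c : ℚ)) / X.card := by
  have hX0 : 0 < X.card := Finset.card_pos.2 ⟨g ⟨0, hn⟩, hgX _⟩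
  rcases hp with rfl | rfl
  · exact EU_pRC hW ul
  · rw [EU_pRV hu hW g hgX hg2, sum_comp hgX hcnt]
    have hs0 : 0 < s := by
      rcases Nat.eq_zero_or_pos s with h | h
      · subst h; rw [Nat.mul_zero] at hks; omega
      · exact h
    have hn' : ((n : ℚ)) = (X.card : ℚ) * s := by exact_mod_cast hks.symm
    rw [hn']
    rw [mul_comm (X.card : ℚ) (s : ℚ), mul_div_mul_left _ _ (by positivity)]

end Helpers
section Helpers2

lemma strict_le {m : ℕ} {v : Fin m → ℕ} (hv : Function.Injective v) {c c' : Fin m}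
    (hne : c ≠ c') (hle : v c ≤ v c') : (v c : ℚ) ≤ (v c' : ℚ) - 1 := by
  have h1 : v c < v c' := lt_of_le_of_ne hle (fun h => hne (hv h))
  have h2 : (v c : ℚ) + 1 ≤ v c' := by exact_mod_cast h1
  linarith

lemma sum_lt_max {m : ℕ} {S : Finset (Fin m)} {v : Fin m → ℕ} {cM : Fin m}
    (hv : Function.Injective v) (hM : cM ∈ S) (h2 : 2 ≤ S.card)
    (hmax : ∀ c ∈ S, v c ≤ v cM) :
    ∑ c ∈ S, (v c : ℚ) ≤ (S.card : ℚ) * (v cM : ℚ) - 1 := by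
  have hsplit := Finset.sum_erase_add S (fun c => (v c : ℚ)) hM
  have hbd := sum_le_bound (S := S.erase cM) (v := v) (B := (v cM : ℚ) - 1)
    (fun c hc => strict_le hv (Finset.mem_erase.1 hc).1 (hmax c (Finset.mem_erase.1 hc).2))
  rw [Finset.card_erase_of_mem hM] at hbd
  have hcast : ((S.card - 1 : ℕ) : ℚ) = (S.card : ℚ) - 1 := by
    have h1 : 1 ≤ S.card := by omega
    push_cast [h1]
    ring
  rw [hcast] at hbd
  have hK2 : (2:ℚ) ≤ (S.card : ℚ) := by exact_mod_cast h2
  nlinarith [hsplit, hbd]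

end Helpers2
section Master

lemma master_pne {n m : ℕ} (hn : 0 < n) (hm : 0 < m) (u : Fin n → Fin m → ℕ)
    (hu : ∀ i, Function.Injective (u i)) (ε : ℚ) (hε0 : 0 < ε)
    (hε : ε < min ((m : ℚ)⁻¹) ((n : ℚ)⁻¹)) (a : Fin n → Fin m)
    (ha : ∀ i c, u i c ≤ u i (a i)) (p : Ballot n m → Fin m → ℚ)
    (hp : p = pRC ∨ p = pRV u) (X : Finset (Fin m)) (s : ℕ) (g : Fin n → Fin m)
    (hk2 : 2 ≤ X.card) (hs1 : 1 ≤ s) (hks : X.card * s = n)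
    (hgX : ∀ i, g i ∈ X)
    (hcnt : ∀ c ∈ X, (univ.filter fun i => g i = c).card = s)
    (hfav : ∀ i, ∀ c ∈ X, c ≠ g i → u i c < u i (g i))
    (hlot : ∀ i, ∀ c ∈ X, c ≠ g i → (X.card : ℚ) * (u i c : ℚ) ≤ ∑ c' ∈ X, (u i c' : ℚ))
    (htop : s = 1 → ∀ i, g i = a i) :
    lazyPNE p u ε (fun i => some (g i)) := by
  classical
  set b : Ballot n m := fun i => some (g i) with hbdef
  have hk0 : 0 < X.card := by omega
  have hK0 : (0:ℚ) < (X.card : ℚ) := by exact_mod_cast hk0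
  have hK1 : (0:ℚ) < (X.card : ℚ) - 1 := by
    have : (2:ℚ) ≤ (X.card : ℚ) := by exact_mod_cast hk2
    linarith
  have hkm : X.card ≤ m := by simpa using Finset.card_le_univ X
  have hεk : ε < ((X.card : ℚ))⁻¹ := by
    refine lt_of_lt_of_le (lt_of_lt_of_le hε (min_le_left _ _)) ?_
    have hM0 : (0:ℚ) < (m:ℚ) := by exact_mod_cast hm
    apply inv_anti₀ hK0
    exact_mod_cast hkm
  have hKε : ε * (X.card : ℚ) ≤ 1 := by
    have := (mul_lt_mul_of_pos_right hεk hK0)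
    rw [inv_mul_cancel₀ (ne_of_gt hK0)] at this
    exact this.le
  have hεn : ε < ((n : ℚ))⁻¹ := lt_of_lt_of_le hε (min_le_right _ _)
  have hg2 : ∀ i, ∀ c ∈ X, u i c ≤ u i (g i) := by
    intro i c hc
    by_cases h : c = g i
    · subst h; exact le_rfl
    · exact (hfav i c hc h).le
  have hscb : ∀ c, sc b c = if c ∈ X then s else 0 := by
    intro c
    have h1 := sc_tv g c
    rw [← hbdef] at h1
    rw [h1]
    by_cases hc : c ∈ X
    · rw [if_pos hc, hcnt c hc]
    · rw [if_neg hc, Finset.card_eq_zero]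
      ext i
      simp only [Finset.mem_filter, Finset.mem_univ, true_and, Finset.notMem_empty, iff_false]
      intro h
      exact hc (h ▸ hgX i)
  obtain ⟨hmaxb, hWb⟩ := winSet_eq (s := s) ⟨g ⟨0, hn⟩, hgX _⟩
    (fun c hc => by rw [hscb, if_pos hc])
    (fun c hc => by rw [hscb, if_neg hc]; omega)
  have hEU : ∀ ul, EU ul (p b) = (∑ c ∈ X, (ul c : ℚ)) / X.card :=
    fun ul => EU_p_uniform hp hn hu hWb hgX hg2 hcnt hks ul
  have hscup : ∀ (i : Fin n) (v : Option (Fin m)) (c : Fin m),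
      sc (Function.update b i v) c + (if g i = c then 1 else 0)
        = sc b c + (if v = some c then 1 else 0) := by
    intro i v c
    have h := sc_update b i v c
    have hbi : b i = some (g i) := rfl
    rw [hbi] at h
    simpa using h
  -- key lemma: payoff when winning set becomes X.erase (g i)
  have key_erase : ∀ (i : Fin n) (b'' : Ballot n m), winSet b'' = X.erase (g i) →
      EU (u i) (p b'') + ε ≤ (∑ c' ∈ X, (u i c' : ℚ)) / X.card := by
    intro i b'' hW''
    have hgiX := hgX i
    have hXne' : (X.erase (g i)).Nonempty := by
      rw [← Finset.card_pos, Finset.card_erase_of_mem hgiX]; omega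
    have hsum_split : (∑ c' ∈ X, (u i c' : ℚ))
        = (∑ c' ∈ X.erase (g i), (u i c' : ℚ)) + u i (g i) :=
      (Finset.sum_erase_add X _ hgiX).symm
    have hbound : ∀ c' ∈ X.erase (g i), (u i c' : ℚ) ≤ (u i (g i) : ℚ) - 1 := by
      intro c' hc'
      obtain ⟨hne, hcX⟩ := Finset.mem_erase.1 hc'
      have h2 : u i c' + 1 ≤ u i (g i) := hfav i c' hcX hne
      have h3 : (u i c' : ℚ) + 1 ≤ u i (g i) := by exact_mod_cast h2
      linarith
    rcases hp with rfl | rfl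
    · rw [EU_pRC hW'']
      rw [Finset.card_erase_of_mem hgiX]
      have hS' := sum_le_bound hbound
      rw [Finset.card_erase_of_mem hgiX] at hS'
      have hcast : ((X.card - 1 : ℕ) : ℚ) = (X.card : ℚ) - 1 := by
        have : 1 ≤ X.card := by omega
        push_cast [this]
        ring
      rw [hcast] at hS'
      rw [hcast]
      rw [hsum_split]
      rw [div_add' _ _ _ (ne_of_gt hK1), div_le_div_iff₀ hK1 hK0]
      nlinarith [hS', hKε, hK1, mul_le_mul_of_nonneg_right hKε hK1.le]
    · choose F' hF'1 hF'2 using fun j => Finset.exists_max_image (X.erase (g i)) (u j) hXne'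
      set F : Fin n → Fin m := fun j => if g j = g i then F' j else g j with hF
      have hF1 : ∀ j, F j ∈ X.erase (g i) := by
        intro j
        show (if g j = g i then F' j else g j) ∈ X.erase (g i)
        by_cases h : g j = g i
        · rw [if_pos h]; exact hF'1 j
        · rw [if_neg h]; exact Finset.mem_erase.2 ⟨h, hgX j⟩
      have hF2 : ∀ j, ∀ c ∈ X.erase (g i), u j c ≤ u j (F j) := by
        intro j c hc
        show u j c ≤ u j (if g j = g i then F' j else g j)
        by_cases h : g j = g i
        · rw [if_pos h]; exact hF'2 j c hc
        · rw [if_neg h]; exact hg2 j c (Finset.mem_erase.1 hc).2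
      rw [EU_pRV hu hW'' F hF1 hF2]
      have hterm : ∀ j, (u i (F j) : ℚ) ≤ (u i (g j) : ℚ) - (if g j = g i then 1 else 0) := by
        intro j
        by_cases h : g j = g i
        · rw [if_pos h, h]
          exact hbound _ (hF1 j)
        · rw [if_neg h, sub_zero]
          have : F j = g j := by
            show (if g j = g i then F' j else g j) = g j
            rw [if_neg h]
          rw [this]
      have hsb : (∑ j, (if g j = g i then (1:ℚ) else 0)) = (s : ℚ) := by
        rw [Finset.sum_boole]
        have := hcnt (g i) hgiX
        exact_mod_cast congrArg (Nat.cast : ℕ → ℚ) this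
      have hsum : (∑ j, (u i (F j) : ℚ)) ≤ (∑ j, (u i (g j) : ℚ)) - s := by
        calc (∑ j, (u i (F j) : ℚ))
            ≤ ∑ j, ((u i (g j) : ℚ) - (if g j = g i then 1 else 0)) :=
              Finset.sum_le_sum (fun j _ => hterm j)
          _ = (∑ j, (u i (g j) : ℚ)) - ∑ j, (if g j = g i then (1:ℚ) else 0) := by
              rw [Finset.sum_sub_distrib]
          _ = (∑ j, (u i (g j) : ℚ)) - s := by rw [hsb]
      have hn0 : (0:ℚ) < n := by exact_mod_cast hn
      have hncast : (n : ℚ) = (X.card : ℚ) * (s : ℚ) := by exact_mod_cast hks.symm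
      have hdiv : (∑ j, (u i (F j) : ℚ)) / n
          ≤ ((∑ c' ∈ X, (u i c' : ℚ)) - 1) / (X.card : ℚ) := by
        rw [div_le_div_iff₀ hn0 hK0]
        have h5 : (∑ j, (u i (F j) : ℚ)) ≤ (s:ℚ) * ((∑ c' ∈ X, (u i c' : ℚ)) - 1) := by
          rw [mul_sub, mul_one, ← sum_comp hgX hcnt]
          exact hsum
        rw [hncast]
        nlinarith [h5, hK0]
      have heq : ((∑ c' ∈ X, (u i c' : ℚ)) - 1) / (X.card : ℚ) + ((X.card:ℚ))⁻¹
          = (∑ c' ∈ X, (u i c' : ℚ)) / X.card := by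
        field_simp
        ring
      linarith [hdiv, hεk]
  -- the main PNE argument
  intro i v
  have hbi : b i = some (g i) := rfl
  have hRHS : lazyU p u ε i b = (∑ c' ∈ X, (u i c' : ℚ)) / X.card := by
    rw [lazyU, hEU, hbi]
    simp
  rw [hRHS]
  rcases v with _ | c
  · -- abstain deviation
    have hW' : winSet (Function.update b i none) = X.erase (g i) := by
      refine (winSet_eq (s := s) ?_ ?_ ?_).2
      · rw [← Finset.card_pos, Finset.card_erase_of_mem (hgX i)]; omega
      · intro c hc
        obtain ⟨hne, hcX⟩ := Finset.mem_erase.1 hc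
        have h := hscup i none c
        rw [if_neg (fun h' => hne h'.symm), if_neg (by simp)] at h
        rw [hscb, if_pos hcX] at h
        omega
      · intro c hc
        by_cases hgc : c = g i
        · have h := hscup i none (g i)
          rw [if_pos rfl, if_neg (by simp)] at h
          rw [hscb, if_pos (hgX i)] at h
          rw [hgc]
          omega
        · have hcX : c ∉ X := fun hcX => hc (Finset.mem_erase.2 ⟨hgc, hcX⟩)
          have h := hscup i none c
          rw [if_neg (fun h' => hgc h'.symm), if_neg (by simp)] at h
          rw [hscb, if_neg hcX] at h
          omega
    have hpay : lazyU p u ε i (Function.update b i none)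
        = EU (u i) (p (Function.update b i none)) + ε := by
      rw [lazyU, Function.update_self, if_pos rfl]
    rw [hpay]
    exact key_erase i _ hW'
  · -- voting deviation: vote for c
    have hpay : lazyU p u ε i (Function.update b i (some c))
        = EU (u i) (p (Function.update b i (some c))) := by
      rw [lazyU, Function.update_self, if_neg (by simp), add_zero]
    rw [hpay]
    by_cases hcg : c = g i
    · have hup : Function.update b i (some c) = b := by
        rw [hcg]
        conv_lhs => rw [show (some (g i)) = b i from rfl]
        exact Function.update_eq_self i b
      rw [hup, hEU]
    · by_cases hcX : c ∈ X
      · -- c in X, c ≠ g i : c becomes sole winner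
        have hW' : winSet (Function.update b i (some c)) = {c} := by
          refine (winSet_eq (s := s + 1) ⟨c, Finset.mem_singleton_self c⟩ ?_ ?_).2
          · intro c' hc'
            rw [Finset.mem_singleton] at hc'
            subst hc'
            have h := hscup i (some c') c'
            rw [if_neg (fun h' => hcg h'.symm), if_pos rfl] at h
            rw [hscb, if_pos hcX] at h
            omega
          · intro c' hc'
            rw [Finset.mem_singleton] at hc'
            have h := hscup i (some c) c'
            rw [if_neg (by simp [Ne.symm hc'] : ¬ (some c = some c'))] at h
            by_cases hgc : c' = g i
            · rw [hgc] at h ⊢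
              rw [if_pos rfl] at h
              rw [hscb, if_pos (hgX i)] at h
              omega
            · rw [if_neg (fun h' => hgc h'.symm)] at h
              rw [hscb] at h
              by_cases hc'X : c' ∈ X
              · rw [if_pos hc'X] at h; omega
              · rw [if_neg hc'X] at h; omega
        rw [EU_p_singleton hp hn hu hW']
        rw [le_div_iff₀ hK0]
        rw [mul_comm]
        exact hlot i c hcX hcg
      · -- c outside X
        by_cases hs2 : 2 ≤ s
        · -- fresh candidate stays below: winning set X.erase (g i)
          have hW' : winSet (Function.update b i (some c)) = X.erase (g i) := by
            refine (winSet_eq (s := s) ?_ ?_ ?_).2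
            · rw [← Finset.card_pos, Finset.card_erase_of_mem (hgX i)]; omega
            · intro c' hc'
              obtain ⟨hne, hc'X⟩ := Finset.mem_erase.1 hc'
              have h := hscup i (some c) c'
              rw [if_neg (fun h' => hne h'.symm),
                if_neg (by simp [show c ≠ c' from fun h' => hcX (h' ▸ hc'X)])] at h
              rw [hscb, if_pos hc'X] at h
              omega
            · intro c' hc'
              have h := hscup i (some c) c'
              by_cases hgc : c' = g i
              · rw [hgc] at h ⊢
                rw [if_pos rfl, if_neg (by simp [show c ≠ g i from hcg])] at h
                rw [hscb, if_pos (hgX i)] at h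
                omega
              · have hc'X : c' ∉ X := fun hX' => hc' (Finset.mem_erase.2 ⟨hgc, hX'⟩)
                rw [if_neg (fun h' => hgc h'.symm)] at h
                rw [hscb, if_neg hc'X] at h
                by_cases hcc : c = c'
                · rw [if_pos (by rw [hcc])] at h
                  omega
                · rw [if_neg (by simp [hcc])] at h
                  omega
          have h1 := key_erase i _ hW'
          linarith
        · -- s = 1 : winning set becomes insert c (X.erase (g i))
          have hs1' : s = 1 := by omega
          have hga : ∀ j, g j = a j := htop hs1'
          have hkn : X.card = n := by
            have h8 := hks
            rw [hs1', mul_one] at h8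
            exact h8
          have hce : c ∉ X.erase (g i) := fun h => hcX (Finset.mem_erase.1 h).2
          have hfib : ∀ j, g j = g i → j = i := by
            intro j hj
            have h1 := hcnt (g i) (hgX i)
            rw [hs1'] at h1
            exact Finset.card_le_one.1 (le_of_eq h1) j
              (Finset.mem_filter.2 ⟨Finset.mem_univ _, hj⟩) i
              (Finset.mem_filter.2 ⟨Finset.mem_univ _, rfl⟩)
          have hW' : winSet (Function.update b i (some c)) = insert c (X.erase (g i)) := by
            refine (winSet_eq (s := 1) ⟨c, Finset.mem_insert_self _ _⟩ ?_ ?_).2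
            · intro c' hc'
              rcases Finset.mem_insert.1 hc' with rfl | hc'
              · have h := hscup i (some c') c'
                rw [if_neg (fun h' => hcg h'.symm), if_pos rfl] at h
                rw [hscb, if_neg hcX] at h
                omega
              · obtain ⟨hne, hc'X⟩ := Finset.mem_erase.1 hc'
                have h := hscup i (some c) c'
                rw [if_neg (fun h' => hne h'.symm),
                  if_neg (by simp [show c ≠ c' from fun h' => hcX (h' ▸ hc'X)])] at h
                rw [hscb, if_pos hc'X, hs1'] at h
                omega
            · intro c' hc'
              have hcc : c ≠ c' := fun h' => hc' (h' ▸ Finset.mem_insert_self _ _)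
              by_cases hgc : c' = g i
              · rw [hgc]
                have h := hscup i (some c) (g i)
                rw [if_pos rfl, if_neg (fun h' => hcg (Option.some.inj h'))] at h
                rw [hscb, if_pos (hgX i), hs1'] at h
                omega
              · have hc'X : c' ∉ X := fun hX' =>
                  hc' (Finset.mem_insert_of_mem (Finset.mem_erase.2 ⟨hgc, hX'⟩))
                have h := hscup i (some c) c'
                rw [if_neg (fun h' => hgc h'.symm),
                  if_neg (fun h' => hcc (Option.some.inj h'))] at h
                rw [hscb, if_neg hc'X] at h
                omega
          have hcard' : (insert c (X.erase (g i))).card = X.card := by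
            rw [Finset.card_insert_of_notMem hce, Finset.card_erase_of_mem (hgX i)]
            omega
          rcases hp with rfl | rfl
          · rw [EU_pRC hW', hcard', Finset.sum_insert hce]
            have hsum_split : (∑ c' ∈ X, (u i c' : ℚ))
                = (∑ c' ∈ X.erase (g i), (u i c' : ℚ)) + u i (g i) :=
              (Finset.sum_erase_add X _ (hgX i)).symm
            rw [hsum_split]
            have hc1 : (u i c : ℚ) ≤ (u i (g i) : ℚ) := by
              rw [hga i]
              exact_mod_cast ha i c
            rw [div_le_div_iff₀ hK0 hK0]
            nlinarith [hc1, hK0]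
          · obtain ⟨cF, hcF1, hcF2⟩ := Finset.exists_max_image
              (insert c (X.erase (g i))) (u i) ⟨c, Finset.mem_insert_self _ _⟩
            set F : Fin n → Fin m := fun j => if j = i then cF else g j with hF
            have hF1 : ∀ j, F j ∈ insert c (X.erase (g i)) := by
              intro j
              show (if j = i then cF else g j) ∈ insert c (X.erase (g i))
              by_cases h : j = i
              · rw [if_pos h]; exact hcF1
              · rw [if_neg h]
                exact Finset.mem_insert_of_mem
                  (Finset.mem_erase.2 ⟨fun h' => h (hfib j h'), hgX j⟩)
            have hF2 : ∀ j, ∀ c' ∈ insert c (X.erase (g i)), u j c' ≤ u j (F j) := by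
              intro j c' hc'
              show u j c' ≤ u j (if j = i then cF else g j)
              by_cases h : j = i
              · rw [if_pos h, h]
                exact hcF2 c' hc'
              · rw [if_neg h, hga j]
                exact ha j c'
            rw [EU_pRV hu hW' F hF1 hF2]
            have hsum : (∑ j, (u i (F j) : ℚ)) ≤ ∑ j, (u i (g j) : ℚ) := by
              refine Finset.sum_le_sum fun j _ => ?_
              have hFj : F j = if j = i then cF else g j := rfl
              rw [hFj]
              by_cases h : j = i
              · rw [if_pos h, h]
                have h7 : u i cF ≤ u i (a i) := ha i cF
                rw [← hga i] at h7
                exact_mod_cast h7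
              · rw [if_neg h]
            have hsc : (∑ j, (u i (g j) : ℚ)) = (s : ℚ) * ∑ c' ∈ X, (u i c' : ℚ) :=
              sum_comp hgX hcnt (u i)
            have hn0 : (0:ℚ) < n := by exact_mod_cast hn
            have hncast : ((n:ℚ)) = (X.card : ℚ) := by exact_mod_cast hkn.symm
            rw [div_le_div_iff₀ hn0 hK0, ← hncast]
            have hs1c : (s:ℚ) = 1 := by rw [hs1']; norm_num
            have h6 : (∑ j, (u i (F j) : ℚ)) ≤ ∑ c' ∈ X, (u i c' : ℚ) := by
              rw [hsc, hs1c, one_mul] at hsum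
              exact hsum
            exact mul_le_mul_of_nonneg_right h6 hn0.le
  
end Master
section Unan

lemma pne_unanimous {n m : ℕ} (hn : 0 < n) (hm : 0 < m) (u : Fin n → Fin m → ℕ)
    (hu : ∀ i, Function.Injective (u i)) (ε : ℚ) (hε0 : 0 < ε)
    (hε : ε < min ((m : ℚ)⁻¹) ((n : ℚ)⁻¹)) (a : Fin n → Fin m)
    (ha : ∀ i c, u i c ≤ u i (a i)) (p : Ballot n m → Fin m → ℚ)
    (hp : p = pRC ∨ p = pRV u) (c0 : Fin m) (hc0 : ∀ i, a i = c0) :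
    ∃ b, lazyPNE p u ε b := by
  classical
  have hεm : ε < ((m:ℚ))⁻¹ := lt_of_lt_of_le hε (min_le_left _ _)
  have hεn : ε < ((n:ℚ))⁻¹ := lt_of_lt_of_le hε (min_le_right _ _)
  have hM0 : (0:ℚ) < (m:ℚ) := by exact_mod_cast hm
  have hN0 : (0:ℚ) < (n:ℚ) := by exact_mod_cast hn
  have hMε : ε * (m:ℚ) < 1 := by
    have := mul_lt_mul_of_pos_right hεm hM0
    rwa [inv_mul_cancel₀ (ne_of_gt hM0)] at this
  have hsc0 : ∀ c, sc (fun _ : Fin n => (none : Option (Fin m))) c = 0 := by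
    intro c
    rw [sc, Finset.card_eq_zero]
    ext j
    simp
  have hW0 : winSet (fun _ : Fin n => (none : Option (Fin m))) = univ :=
    (winSet_eq (s := 0) ⟨⟨0, hm⟩, mem_univ _⟩ (fun c _ => hsc0 c)
      (fun c hc => absurd (mem_univ c) hc)).2
  have hscup1 : ∀ (b0 : Ballot n m), (∀ c, sc b0 c = 0) → ∀ (i : Fin n), b0 i = none →
      ∀ (c c' : Fin m), sc (Function.update b0 i (some c)) c' = if c' = c then 1 else 0 := by
    intro b0 hb0 i hbi c c'
    have h := sc_update b0 i (some c) c'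
    rw [hbi, if_neg (by simp), add_zero, hb0 c', zero_add] at h
    rw [h]
    by_cases hcc : c' = c
    · rw [if_pos (by rw [hcc]), if_pos hcc]
    · rw [if_neg (fun h' => hcc (Option.some.inj h').symm), if_neg hcc]
  have hWup1 : ∀ (b0 : Ballot n m), (∀ c, sc b0 c = 0) → ∀ (i : Fin n), b0 i = none →
      ∀ (c : Fin m), winSet (Function.update b0 i (some c)) = {c} := by
    intro b0 hb0 i hbi c
    refine (winSet_eq (s := 1) ⟨c, Finset.mem_singleton_self c⟩ ?_ ?_).2
    · intro c' hc'
      rw [Finset.mem_singleton] at hc'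
      rw [hscup1 b0 hb0 i hbi c c', if_pos hc']
    · intro c' hc'
      rw [Finset.mem_singleton] at hc'
      rw [hscup1 b0 hb0 i hbi c c', if_neg hc']
      omega
  have htopc : ∀ (i : Fin n) (c : Fin m), u i c ≤ u i c0 := by
    intro i c
    rw [← hc0 i]
    exact ha i c
  rcases hp with rfl | rfl
  · -- random candidate
    by_cases hm1 : m = 1
    · -- all candidates coincide; all-abstain is a PNE
      refine ⟨fun _ => none, ?_⟩
      have hall : ∀ c : Fin m, c = c0 := by
        intro c
        apply Fin.ext
        omega
      have huniv : (univ : Finset (Fin m)) = {c0} := by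
        ext c
        simp [hall c]
      have hEU0 : ∀ ul : Fin m → ℕ,
          EU ul (pRC (fun _ : Fin n => (none : Option (Fin m)))) = ul c0 := by
        intro ul
        rw [EU_pRC hW0, huniv]
        simp
      intro i v
      rcases v with _ | c
      · rw [show (none : Option (Fin m)) = (fun _ : Fin n => (none : Option (Fin m))) i from rfl,
          Function.update_eq_self]
      · have hW' := hWup1 _ hsc0 i rfl c
        have hpay : lazyU pRC u ε i
            (Function.update (fun _ : Fin n => (none : Option (Fin m))) i (some c)) = u i c := by
          rw [lazyU, EU_p_singleton (Or.inl rfl) hn hu hW', Function.update_self]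
          simp
        have hRHS : lazyU pRC u ε i (fun _ : Fin n => (none : Option (Fin m)))
            = u i c0 + ε := by
          rw [lazyU, hEU0]
          simp
        rw [hpay, hRHS, hall c]
        linarith
    · -- m ≥ 2 : the profile where voter 0 votes c0
      have hm2 : 2 ≤ m := by omega
      have hM2 : (2:ℚ) ≤ (m:ℚ) := by exact_mod_cast hm2
      set i0 : Fin n := ⟨0, hn⟩ with hi0
      set b : Ballot n m := fun j => if j = i0 then some c0 else none with hb
      have hbi0 : b i0 = some c0 := by
        show (if i0 = i0 then some c0 else none) = some c0
        rw [if_pos rfl]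
      have hscb : ∀ c, sc b c = if c = c0 then 1 else 0 := by
        intro c
        by_cases h : c = c0
        · rw [if_pos h, sc, Finset.card_eq_one]
          refine ⟨i0, ?_⟩
          ext j
          simp only [Finset.mem_filter, Finset.mem_univ, true_and, Finset.mem_singleton, hb]
          constructor
          · intro hj
            by_cases hji : j = i0
            · exact hji
            · rw [if_neg hji] at hj
              exact absurd hj (by simp)
          · intro hj
            rw [if_pos hj, h]
        · rw [if_neg h, sc, Finset.card_eq_zero]
          ext j
          simp only [Finset.mem_filter, Finset.mem_univ, true_and, Finset.notMem_empty,
            iff_false, hb]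
          by_cases hji : j = i0
          · rw [if_pos hji]
            exact fun h' => h (Option.some.inj h').symm
          · rw [if_neg hji]
            simp
      have hWb : winSet b = {c0} :=
        (winSet_eq (s := 1) ⟨c0, Finset.mem_singleton_self c0⟩
          (fun c hc => by rw [hscb, if_pos (Finset.mem_singleton.1 hc)])
          (fun c hc => by
            rw [hscb, if_neg (fun h => hc (by rw [h]; exact Finset.mem_singleton_self c0))]
            omega)).2
      have hEUb : ∀ ul : Fin m → ℕ, EU ul (pRC b) = ul c0 :=
        fun ul => EU_p_singleton (Or.inl rfl) hn hu hWb ul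
      refine ⟨b, ?_⟩
      intro i v
      by_cases hi : i = i0
      · -- the voter who votes
        have hbi : b i = some c0 := by
          show (if i = i0 then some c0 else none) = some c0
          rw [if_pos hi]
        have hRHS : lazyU pRC u ε i b = u i c0 := by
          rw [lazyU, hEUb, hbi]
          simp
        rw [hRHS]
        rcases v with _ | c
        · -- abstain: winning set becomes univ
          have hupd : Function.update b i none = fun _ : Fin n => (none : Option (Fin m)) := by
            funext j
            by_cases hj : j = i
            · rw [hj, Function.update_self]
            · rw [Function.update_of_ne hj]
              show (if j = i0 then some c0 else none) = none
              rw [if_neg (fun h' => hj (h'.trans hi.symm))]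
          have hpay : lazyU pRC u ε i (Function.update b i none)
              = (∑ c, (u i c : ℚ)) / m + ε := by
            rw [lazyU, hupd, EU_pRC hW0, Finset.card_univ, Fintype.card_fin]
            simp
          rw [hpay]
          have hc0top : ∀ c, c ≠ c0 → (u i c : ℚ) ≤ (u i c0 : ℚ) - 1 := by
            intro c hc
            have h1 : u i c < u i c0 := lt_of_le_of_ne (htopc i c) (fun h' => hc (hu i h'))
            have h2 : (u i c : ℚ) + 1 ≤ (u i c0 : ℚ) := by exact_mod_cast h1
            linarith
          have hsplit : (∑ c, (u i c : ℚ)) = (∑ c ∈ univ.erase c0, (u i c : ℚ)) + u i c0 :=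
            (Finset.sum_erase_add univ _ (mem_univ c0)).symm
          have hbd := sum_le_bound (S := univ.erase c0) (v := u i) (B := (u i c0 : ℚ) - 1)
            (fun c hcm => hc0top c (Finset.mem_erase.1 hcm).1)
          rw [Finset.card_erase_of_mem (mem_univ c0), Finset.card_univ, Fintype.card_fin] at hbd
          have hcast : ((m - 1 : ℕ) : ℚ) = (m : ℚ) - 1 := by
            have h1 : 1 ≤ m := hm
            push_cast [h1]
            ring
          rw [hcast] at hbd
          rw [div_add' _ _ _ (ne_of_gt hM0), div_le_iff₀ hM0]
          nlinarith [hbd, hsplit, hMε, hM2]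
        · -- vote some c instead
          have hupd : Function.update b i (some c)
              = Function.update (fun _ : Fin n => (none : Option (Fin m))) i (some c) := by
            funext j
            by_cases hj : j = i
            · rw [hj, Function.update_self, Function.update_self]
            · rw [Function.update_of_ne hj, Function.update_of_ne hj]
              show (if j = i0 then some c0 else none) = none
              rw [if_neg (fun h' => hj (h'.trans hi.symm))]
          have hW' : winSet (Function.update b i (some c)) = {c} := by
            rw [hupd]
            exact hWup1 _ hsc0 i rfl c
          have hpay : lazyU pRC u ε i (Function.update b i (some c)) = u i c := by
            rw [lazyU, EU_p_singleton (Or.inl rfl) hn hu hW', Function.update_self]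
            simp
          rw [hpay]
          exact_mod_cast htopc i c
      · -- an abstaining voter
        have hbi : b i = none := by
          show (if i = i0 then some c0 else none) = none
          rw [if_neg hi]
        have hRHS : lazyU pRC u ε i b = u i c0 + ε := by
          rw [lazyU, hEUb, hbi]
          simp
        rw [hRHS]
        rcases v with _ | c
        · rw [show (none : Option (Fin m)) = b i from hbi.symm, Function.update_eq_self, hRHS]
        · have hsc' : ∀ c', sc (Function.update b i (some c)) c'
              = (if c' = c0 then 1 else 0) + (if c' = c then 1 else 0) := by
            intro c'
            have h := sc_update b i (some c) c'
            rw [hbi, if_neg (by simp), add_zero, hscb] at h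
            rw [h]
            by_cases h2 : c' = c
            · rw [if_pos (congrArg some h2.symm), if_pos h2]
            · rw [if_neg (fun h' => h2 (Option.some.inj h').symm), if_neg h2]
          by_cases hcc : c = c0
          · have hW' : winSet (Function.update b i (some c)) = {c0} := by
              refine (winSet_eq (s := 2) ⟨c0, Finset.mem_singleton_self _⟩ ?_ ?_).2
              · intro c' hc'
                rw [Finset.mem_singleton] at hc'
                rw [hsc' c', if_pos hc', if_pos (hc'.trans hcc.symm)]
              · intro c' hc'
                rw [Finset.mem_singleton] at hc'
                rw [hsc' c', if_neg hc', if_neg (fun h' => hc' (h'.trans hcc))]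
                omega
            have hpay : lazyU pRC u ε i (Function.update b i (some c)) = u i c0 := by
              rw [lazyU, EU_p_singleton (Or.inl rfl) hn hu hW', Function.update_self]
              simp
            rw [hpay]
            linarith
          · have hW' : winSet (Function.update b i (some c)) = {c0, c} := by
              refine (winSet_eq (s := 1) ⟨c0, Finset.mem_insert_self _ _⟩ ?_ ?_).2
              · intro c' hc'
                rcases Finset.mem_insert.1 hc' with rfl | hc'
                · rw [hsc' c', if_pos rfl, if_neg (fun h' => hcc h'.symm)]
                · rw [Finset.mem_singleton] at hc'
                  rw [hsc' c', if_pos hc', if_neg (by rw [hc']; exact hcc)]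
              · intro c' hc'
                have h1 : c' ≠ c0 := fun h' => hc' (by rw [h']; exact Finset.mem_insert_self _ _)
                have h2 : c' ≠ c := fun h' => hc'
                  (by rw [h']; exact Finset.mem_insert_of_mem (Finset.mem_singleton_self c))
                rw [hsc' c', if_neg h1, if_neg h2]
                omega
            have hcard2 : ({c0, c} : Finset (Fin m)).card = 2 := by
              rw [Finset.card_insert_of_notMem (fun h' =>
                hcc (Finset.mem_singleton.1 h').symm), Finset.card_singleton]
            have hpay : lazyU pRC u ε i (Function.update b i (some c))
                = ((u i c0 : ℚ) + u i c) / 2 := by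
              rw [lazyU, EU_pRC hW', hcard2,
                Finset.sum_pair (fun h' => hcc h'.symm), Function.update_self]
              simp
            rw [hpay]
            have h3 : (u i c : ℚ) ≤ (u i c0 : ℚ) := by exact_mod_cast htopc i c
            rw [div_le_iff₀ (by norm_num : (0:ℚ) < 2)]
            linarith
  · -- random voter : all-abstain is a PNE
    refine ⟨fun _ => none, ?_⟩
    have hEU0 : ∀ l, EU (u l) (pRV u (fun _ : Fin n => (none : Option (Fin m)))) = u l c0 := by
      intro l
      rw [EU_pRV hu hW0 a (fun i => mem_univ _) (fun i c' _ => ha i c')]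
      have h1 : ∀ j : Fin n, (u l (a j) : ℚ) = (u l c0 : ℚ) := fun j => by rw [hc0 j]
      rw [Finset.sum_congr rfl (fun j _ => h1 j), Finset.sum_const, nsmul_eq_mul,
        Finset.card_univ, Fintype.card_fin]
      field_simp
    intro i v
    rcases v with _ | c
    · rw [show (none : Option (Fin m)) = (fun _ : Fin n => (none : Option (Fin m))) i from rfl,
        Function.update_eq_self]
    · have hW' := hWup1 _ hsc0 i rfl c
      have hpay : lazyU (pRV u) u ε i
          (Function.update (fun _ : Fin n => (none : Option (Fin m))) i (some c)) = u i c := by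
        rw [lazyU, EU_p_singleton (Or.inr rfl) hn hu hW', Function.update_self]
        simp
      have hRHS : lazyU (pRV u) u ε i (fun _ : Fin n => (none : Option (Fin m)))
          = u i c0 + ε := by
        rw [lazyU, hEU0]
        simp
      rw [hpay, hRHS]
      have h2 : (u i c : ℚ) ≤ (u i c0 : ℚ) := by exact_mod_cast htopc i c
      linarith

end Unan
section Forward

set_option maxHeartbeats 1000000 in

lemma pne_forward {n m : ℕ} (hn : 0 < n) (hm : 0 < m) (u : Fin n → Fin m → ℕ)
    (hu : ∀ i, Function.Injective (u i)) (ε : ℚ) (hε0 : 0 < ε)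
    (hε : ε < min ((m : ℚ)⁻¹) ((n : ℚ)⁻¹)) (a : Fin n → Fin m)
    (ha : ∀ i c, u i c ≤ u i (a i)) (p : Ballot n m → Fin m → ℚ)
    (hp : p = pRC ∨ p = pRV u) (b : Ballot n m) (hb : lazyPNE p u ε b) :
    (∃ c, ∀ i, a i = c) ∨
    ((∀ c : Fin m, (univ.filter fun i => a i = c).card ≤ 1) ∧
      ∀ l i : Fin n, i ≠ l → (n : ℚ) * (u l (a i) : ℚ) ≤ ∑ i' : Fin n, (u l (a i') : ℚ)) ∨
    (∃ (k : ℕ) (X : Finset (Fin m)), X.card = k ∧ 2 ≤ k ∧ 2 * k ≤ n ∧ k ≤ m ∧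
      ∃ g : Fin n → Fin m, (∀ i, g i ∈ X) ∧
        (∀ c ∈ X, (univ.filter fun i => g i = c).card * k = n) ∧
        (∀ i, ∀ c ∈ X, c ≠ g i → u i c < u i (g i)) ∧
        (∀ i, ∀ c ∈ X, c ≠ g i → (k : ℚ) * (u i c : ℚ) ≤ ∑ c' ∈ X, (u i c' : ℚ))) := by
  classical
  have hεm : ε < ((m:ℚ))⁻¹ := lt_of_lt_of_le hε (min_le_left _ _)
  have hεn : ε < ((n:ℚ))⁻¹ := lt_of_lt_of_le hε (min_le_right _ _)
  have hM0 : (0:ℚ) < (m:ℚ) := by exact_mod_cast hm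
  have hN0 : (0:ℚ) < (n:ℚ) := by exact_mod_cast hn
  have hMε : ε * (m:ℚ) < 1 := by
    have := mul_lt_mul_of_pos_right hεm hM0
    rwa [inv_mul_cancel₀ (ne_of_gt hM0)] at this
  have hNε : ε * (n:ℚ) < 1 := by
    have := mul_lt_mul_of_pos_right hεn hN0
    rwa [inv_mul_cancel₀ (ne_of_gt hN0)] at this
  -- Step A : every cast vote goes to a winning candidate
  have hvote : ∀ i c, b i = some c → c ∈ winSet b := by
    intro i c hbic
    by_contra hc
    have hW' : winSet (Function.update b i none) = winSet b := by
      refine (winSet_eq (s := maxScore b) (winSet_nonempty hm b) ?_ ?_).2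
      · intro c' hc'
        have h := sc_update b i none c'
        rw [hbic, if_neg (show ¬(none : Option (Fin m)) = some c' by simp), add_zero] at h
        rw [if_neg (show ¬some c = some c' from
          fun h' => hc (by rw [Option.some.inj h']; exact hc'))] at h
        rw [add_zero] at h
        rw [h]
        exact mem_winSet.1 hc'
      · intro c' hc'
        have h := sc_update b i none c'
        rw [hbic, if_neg (show ¬(none : Option (Fin m)) = some c' by simp), add_zero] at h
        have h2 : sc b c' < maxScore b :=
          lt_of_le_of_ne (sc_le_maxScore b c') (fun h' => hc' (mem_winSet.2 h'))
        split_ifs at h <;> omega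
    have hpeq : p (Function.update b i none) = p b := p_congr hp hW'
    have hdev := hb i none
    rw [lazyU, lazyU, hpeq, Function.update_self, if_pos rfl, hbic, if_neg (by simp)] at hdev
    linarith
  have hsc_out : ∀ c, c ∉ winSet b → sc b c = 0 := by
    intro c hc
    by_contra h0
    obtain ⟨i, hi⟩ := Finset.card_pos.1 (Nat.pos_of_ne_zero h0)
    exact hc (hvote i c (Finset.mem_filter.1 hi).2)
  by_cases hs0 : maxScore b = 0
  · -- nobody votes : unanimous tops
    left
    have hnone : ∀ i, b i = none := by
      intro i
      cases hbi : b i with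
      | none => rfl
      | some c =>
        have h1 : 0 < sc b c :=
          Finset.card_pos.2 ⟨i, Finset.mem_filter.2 ⟨mem_univ _, hbi⟩⟩
        have h2 := sc_le_maxScore b c
        omega
    have hsc_all : ∀ c, sc b c = 0 := fun c => by
      have := sc_le_maxScore b c
      omega
    have hWu : winSet b = univ := by
      ext c
      rw [mem_winSet, hs0]
      simp [hsc_all c]
    set i0 : Fin n := ⟨0, hn⟩ with hi0
    have hW' : winSet (Function.update b i0 (some (a i0))) = {a i0} := by
      refine (winSet_eq (s := 1) ⟨_, Finset.mem_singleton_self _⟩ ?_ ?_).2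
      · intro c' hc'
        rw [Finset.mem_singleton] at hc'
        rw [hc']
        have h := sc_update b i0 (some (a i0)) (a i0)
        rw [hnone i0, if_neg (show ¬(none : Option (Fin m)) = some (a i0) by simp),
          add_zero, if_pos rfl, hsc_all] at h
        omega
      · intro c' hc'
        rw [Finset.mem_singleton] at hc'
        have h := sc_update b i0 (some (a i0)) c'
        rw [hnone i0, if_neg (show ¬(none : Option (Fin m)) = some c' by simp), add_zero,
          if_neg (show ¬some (a i0) = some c' from
            fun h' => hc' (Option.some.inj h').symm), hsc_all] at h
        omega
    have hdev := hb i0 (some (a i0))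
    rw [lazyU, lazyU, EU_p_singleton hp hn hu hW', Function.update_self,
      if_neg (show ¬some (a i0) = none by simp), add_zero, hnone i0, if_pos rfl] at hdev
    rcases hp with rfl | rfl
    · -- random candidate
      rw [EU_pRC hWu, Finset.card_univ, Fintype.card_fin] at hdev
      -- m * u i0 (a i0) ≤ ∑ u i0 c  (in ℕ)
      have hNat : m * u i0 (a i0) ≤ ∑ c, u i0 c := by
        have h0 : (u i0 (a i0) : ℚ) - ε ≤ (∑ c, (u i0 c : ℚ)) / m := by linarith
        have h1 := (le_div_iff₀ hM0).1 h0
        have h2 : (m : ℚ) * u i0 (a i0) < (∑ c, (u i0 c : ℚ)) + 1 := by nlinarith [h1, hMε]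
        have h3 : ((m * u i0 (a i0) : ℕ) : ℚ) < ((∑ c, u i0 c : ℕ) : ℚ) + 1 := by
          push_cast
          exact h2
        have h4 : (m * u i0 (a i0) : ℕ) < (∑ c, u i0 c) + 1 := by exact_mod_cast h3
        omega
      have hall : ∀ c, u i0 c = u i0 (a i0) := by
        by_contra hcon
        push_neg at hcon
        obtain ⟨c, hc⟩ := hcon
        have hsum : (∑ c, u i0 c) < ∑ _c : Fin m, u i0 (a i0) :=
          Finset.sum_lt_sum (fun c _ => ha i0 c)
            ⟨c, mem_univ c, lt_of_le_of_ne (ha i0 c) hc⟩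
        rw [Finset.sum_const, Finset.card_univ, Fintype.card_fin, smul_eq_mul] at hsum
        omega
      exact ⟨a i0, fun j => hu i0 (hall (a j))⟩
    · -- random voter
      rw [EU_pRV hu hWu a (fun j => mem_univ _) (fun j c' _ => ha j c')] at hdev
      have hNat : n * u i0 (a i0) ≤ ∑ j, u i0 (a j) := by
        have h0 : (u i0 (a i0) : ℚ) - ε ≤ (∑ j, (u i0 (a j) : ℚ)) / n := by linarith
        have h1 := (le_div_iff₀ hN0).1 h0
        have h2 : (n : ℚ) * u i0 (a i0) < (∑ j, (u i0 (a j) : ℚ)) + 1 := by nlinarith [h1, hNε]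
        have h3 : ((n * u i0 (a i0) : ℕ) : ℚ) < ((∑ j, u i0 (a j) : ℕ) : ℚ) + 1 := by
          push_cast
          exact h2
        have h4 : (n * u i0 (a i0) : ℕ) < (∑ j, u i0 (a j)) + 1 := by exact_mod_cast h3
        omega
      have hall : ∀ j, u i0 (a j) = u i0 (a i0) := by
        by_contra hcon
        push_neg at hcon
        obtain ⟨j, hj⟩ := hcon
        have hsum : (∑ j, u i0 (a j)) < ∑ _j : Fin n, u i0 (a i0) :=
          Finset.sum_lt_sum (fun j _ => ha i0 (a j))
            ⟨j, mem_univ j, lt_of_le_of_ne (ha i0 (a j)) hj⟩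
        rw [Finset.sum_const, Finset.card_univ, Fintype.card_fin, smul_eq_mul] at hsum
        omega
      exact ⟨a i0, fun j => hu i0 (hall j)⟩
  · -- maxScore ≥ 1
    have hs1 : 1 ≤ maxScore b := by omega
    by_cases hk1 : (winSet b).card = 1
    · -- a single winning candidate : unanimity
      left
      obtain ⟨c0, hc0⟩ := Finset.card_eq_one.1 hk1
      have hscc0 : sc b c0 = maxScore b :=
        mem_winSet.1 (hc0 ▸ Finset.mem_singleton_self c0)
      have hsmax : maxScore b = 1 := by
        by_contra hs2'
        have hs2 : 2 ≤ maxScore b := by omega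
        obtain ⟨i, hi⟩ := Finset.card_pos.1 (show 0 < sc b c0 by omega)
        have hbic0 : b i = some c0 := (Finset.mem_filter.1 hi).2
        have hW' : winSet (Function.update b i none) = {c0} := by
          refine (winSet_eq (s := maxScore b - 1) ⟨c0, Finset.mem_singleton_self _⟩ ?_ ?_).2
          · intro c' hc'
            rw [Finset.mem_singleton] at hc'
            rw [hc']
            have h := sc_update b i none c0
            rw [hbic0, if_pos rfl,
              if_neg (show ¬(none : Option (Fin m)) = some c0 by simp), add_zero] at h
            omega
          · intro c' hc'
            rw [Finset.mem_singleton] at hc'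
            have h0 : sc b c' = 0 := hsc_out c'
              (fun hmem => hc' (Finset.mem_singleton.1 (hc0 ▸ hmem)))
            have h := sc_update b i none c'
            rw [if_neg (show ¬(none : Option (Fin m)) = some c' by simp), add_zero, h0] at h
            split_ifs at h <;> omega
        have hpeq : p (Function.update b i none) = p b := p_congr hp (hW'.trans hc0.symm)
        have hdev := hb i none
        rw [lazyU, lazyU, hpeq, Function.update_self, if_pos rfl, hbic0,
          if_neg (show ¬some c0 = none by simp)] at hdev
        linarith
      have hscc1 : sc b c0 = 1 := by rw [hscc0, hsmax]
      obtain ⟨i0, hi0⟩ := Finset.card_eq_one.1 hscc1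
      have hbi0 : b i0 = some c0 := by
        have h1 : i0 ∈ univ.filter (fun i => b i = some c0) := by
          rw [hi0]
          exact Finset.mem_singleton_self i0
        exact (Finset.mem_filter.1 h1).2
      have honly : ∀ j, j ≠ i0 → b j = none := by
        intro j hj
        cases hbj : b j with
        | none => rfl
        | some c =>
          exfalso
          have hcW := hvote j c hbj
          rw [hc0, Finset.mem_singleton] at hcW
          have hjmem : j ∈ univ.filter (fun i => b i = some c0) :=
            Finset.mem_filter.2 ⟨mem_univ _, by rw [hbj, hcW]⟩
          rw [hi0, Finset.mem_singleton] at hjmem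
          exact hj hjmem
      have hEUb : ∀ ul, EU ul (p b) = ul c0 := fun ul => EU_p_singleton hp hn hu hc0 ul
      have hai0 : a i0 = c0 := by
        by_contra hne
        have hW' : winSet (Function.update b i0 (some (a i0))) = {a i0} := by
          refine (winSet_eq (s := 1) ⟨_, Finset.mem_singleton_self _⟩ ?_ ?_).2
          · intro c' hc'
            rw [Finset.mem_singleton] at hc'
            rw [hc']
            have h := sc_update b i0 (some (a i0)) (a i0)
            rw [hbi0, if_neg (show ¬some c0 = some (a i0) from
                fun h' => hne (Option.some.inj h').symm), add_zero, if_pos rfl] at h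
            have h0 : sc b (a i0) = 0 := hsc_out (a i0)
              (fun hmem => hne (Finset.mem_singleton.1 (hc0 ▸ hmem)))
            omega
          · intro c' hc'
            rw [Finset.mem_singleton] at hc'
            have h := sc_update b i0 (some (a i0)) c'
            rw [hbi0, if_neg (show ¬some (a i0) = some c' from
              fun h' => hc' (Option.some.inj h').symm)] at h
            by_cases hcc : c' = c0
            · rw [hcc] at h ⊢
              rw [if_pos rfl, hscc1] at h
              omega
            · have h0 : sc b c' = 0 := hsc_out c'
                (fun hmem => hcc (Finset.mem_singleton.1 (hc0 ▸ hmem)))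
              rw [if_neg (show ¬some c0 = some c' from
                fun h' => hcc (Option.some.inj h').symm), add_zero, h0] at h
              omega
        have hdev := hb i0 (some (a i0))
        rw [lazyU, lazyU, EU_p_singleton hp hn hu hW', hEUb, Function.update_self,
          if_neg (show ¬some (a i0) = none by simp), add_zero, hbi0,
          if_neg (show ¬some c0 = none by simp), add_zero] at hdev
        have h1 : u i0 (a i0) ≤ u i0 c0 := by exact_mod_cast hdev
        exact hne (hu i0 (le_antisymm h1 (ha i0 c0)))
      refine ⟨c0, fun j => ?_⟩
      by_cases hj : j = i0
      · rw [hj, hai0]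
      · by_contra hne
        have hbj := honly j hj
        have hajc0 : a j ≠ c0 := hne
        have hW' : winSet (Function.update b j (some (a j))) = {c0, a j} := by
          refine (winSet_eq (s := 1) ⟨c0, Finset.mem_insert_self _ _⟩ ?_ ?_).2
          · intro c' hc'
            rcases Finset.mem_insert.1 hc' with rfl | hc'
            · have h := sc_update b j (some (a j)) c'
              rw [hbj, if_neg (show ¬(none : Option (Fin m)) = some c' by simp), add_zero,
                if_neg (show ¬some (a j) = some c' from
                  fun h' => hajc0 (Option.some.inj h')), add_zero] at h
              rw [h, hscc1]
            · rw [Finset.mem_singleton] at hc'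
              rw [hc']
              have h := sc_update b j (some (a j)) (a j)
              rw [hbj, if_neg (show ¬(none : Option (Fin m)) = some (a j) by simp), add_zero,
                if_pos rfl] at h
              have h0 : sc b (a j) = 0 := hsc_out (a j)
                (fun hmem => hajc0 (Finset.mem_singleton.1 (hc0 ▸ hmem)))
              omega
          · intro c' hc'
            have h1 : c' ≠ c0 := fun h' => hc' (by rw [h']; exact Finset.mem_insert_self _ _)
            have h2 : c' ≠ a j := fun h' => hc'
              (by rw [h']; exact Finset.mem_insert_of_mem (Finset.mem_singleton_self _))
            have h0 : sc b c' = 0 := hsc_out c'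
              (fun hmem => h1 (Finset.mem_singleton.1 (hc0 ▸ hmem)))
            have h := sc_update b j (some (a j)) c'
            rw [hbj, if_neg (show ¬(none : Option (Fin m)) = some c' by simp), add_zero,
              if_neg (show ¬some (a j) = some c' from
                fun h' => h2 (Option.some.inj h').symm), add_zero, h0] at h
            omega
        have hdev := hb j (some (a j))
        rw [lazyU, lazyU, hEUb, Function.update_self,
          if_neg (show ¬some (a j) = none by simp), add_zero, hbj, if_pos rfl] at hdev
        have hcane : c0 ≠ a j := fun h' => hajc0 h'.symm
        have hcard2 : ({c0, a j} : Finset (Fin m)).card = 2 := by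
          rw [Finset.card_insert_of_notMem (fun h' => hcane (Finset.mem_singleton.1 h')),
            Finset.card_singleton]
        have htopj : u j c0 ≤ u j (a j) := ha j c0
        have hstrictj : (u j c0 : ℚ) ≤ (u j (a j) : ℚ) - 1 := strict_le (hu j) hcane htopj
        rcases hp with rfl | rfl
        · -- random candidate : tie between c0 and a j
          rw [EU_pRC hW', hcard2, Finset.sum_pair hcane] at hdev
          -- (u j c0 + u j (a j)) / 2 ≤ u j c0 + ε
          have hm2 : 2 ≤ m := by
            by_contra hm1
            have : m = 1 := by omega
            exact hcane (Fin.ext (by omega))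
          have hε2 : ε < 2⁻¹ := lt_of_lt_of_le hεm (by
            rw [inv_le_inv₀ hM0 (by norm_num)]
            exact_mod_cast hm2)
          push_cast at hdev
          rw [div_le_iff₀ (by norm_num : (0:ℚ) < 2)] at hdev
          nlinarith [hdev, hstrictj, hε2]
        · -- random voter
          set F2 : Fin n → Fin m := fun i =>
            if u i (a j) ≤ u i c0 then c0 else a j with hF2def
          have hF21 : ∀ i, F2 i ∈ ({c0, a j} : Finset (Fin m)) := by
            intro i
            show (if u i (a j) ≤ u i c0 then c0 else a j) ∈ _
            by_cases h : u i (a j) ≤ u i c0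
            · rw [if_pos h]; exact Finset.mem_insert_self _ _
            · rw [if_neg h]; exact Finset.mem_insert_of_mem (Finset.mem_singleton_self _)
          have hF22 : ∀ i, ∀ c' ∈ ({c0, a j} : Finset (Fin m)), u i c' ≤ u i (F2 i) := by
            intro i c' hc'
            show u i c' ≤ u i (if u i (a j) ≤ u i c0 then c0 else a j)
            rcases Finset.mem_insert.1 hc' with h' | h'
            · rw [h']
              by_cases h : u i (a j) ≤ u i c0
              · rw [if_pos h]
              · rw [if_neg h]
                omega
            · rw [Finset.mem_singleton] at h'
              rw [h']
              by_cases h : u i (a j) ≤ u i c0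
              · rw [if_pos h]
                exact h
              · rw [if_neg h]
          rw [EU_pRV hu hW' F2 hF21 hF22] at hdev
          -- each term is ≥ u j c0, and the term for j is ≥ u j c0 + 1
          have hterm : ∀ i, (u j c0 : ℚ) + (if i = j then 1 else 0) ≤ (u j (F2 i) : ℚ) := by
            intro i
            by_cases h : i = j
            · rw [if_pos h, h]
              have hFj : F2 j = a j := by
                show (if u j (a j) ≤ u j c0 then c0 else a j) = a j
                rw [if_neg (fun h' => by
                  have := le_antisymm h' htopj
                  exact hcane (hu j this.symm))]
              rw [hFj]
              linarith [hstrictj]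
            · rw [if_neg h, add_zero]
              have : F2 i ∈ ({c0, a j} : Finset (Fin m)) := hF21 i
              rcases Finset.mem_insert.1 this with h' | h'
              · rw [h']
              · rw [Finset.mem_singleton] at h'
                rw [h']
                exact_mod_cast htopj
          have hsum_ge : (n:ℚ) * (u j c0) + 1 ≤ ∑ i, (u j (F2 i) : ℚ) := by
            have h1 : ∑ i : Fin n, ((u j c0 : ℚ) + (if i = j then 1 else 0))
                ≤ ∑ i, (u j (F2 i) : ℚ) := Finset.sum_le_sum (fun i _ => hterm i)
            rw [Finset.sum_add_distrib, Finset.sum_const, Finset.card_univ, Fintype.card_fin,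
              nsmul_eq_mul, Finset.sum_boole] at h1
            have h2 : (univ.filter fun i : Fin n => i = j) = {j} := by
              ext i
              simp
            rw [h2, Finset.card_singleton] at h1
            exact_mod_cast h1
          rw [div_le_iff₀ hN0] at hdev
          nlinarith [hdev, hsum_ge, hNε, hε0]
    · -- at least two winning candidates
      have hk2 : 2 ≤ (winSet b).card := by
        have h1 := Finset.card_pos.2 (winSet_nonempty hm b)
        omega
      have hkm : (winSet b).card ≤ m := by
        have h0 := Finset.card_le_univ (winSet b)
        simpa using h0
      have hK0 : (0:ℚ) < ((winSet b).card : ℚ) := by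
        have h0 : 0 < (winSet b).card := by omega
        exact_mod_cast h0
      have hεk : ε < (((winSet b).card : ℚ))⁻¹ := by
        refine lt_of_lt_of_le hεm (inv_anti₀ hK0 ?_)
        exact_mod_cast hkm
      have hKε : ε * ((winSet b).card : ℚ) < 1 := by
        have h0 := mul_lt_mul_of_pos_right hεk hK0
        rwa [inv_mul_cancel₀ (ne_of_gt hK0)] at h0
      choose F hF1 hF2 using fun i =>
        Finset.exists_max_image (winSet b) (u i) (winSet_nonempty hm b)
      have hWsole : ∀ (j : Fin n) (c : Fin m), c ∈ winSet b → b j ≠ some c →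
          winSet (Function.update b j (some c)) = {c} := by
        intro j c hcW hbjc
        refine (winSet_eq (s := maxScore b + 1) ⟨c, Finset.mem_singleton_self _⟩ ?_ ?_).2
        · intro c' hc'
          rw [Finset.mem_singleton] at hc'
          rw [hc']
          have h := sc_update b j (some c) c
          rw [if_neg hbjc, add_zero, if_pos rfl] at h
          rw [mem_winSet] at hcW
          omega
        · intro c' hc'
          rw [Finset.mem_singleton] at hc'
          have h := sc_update b j (some c) c'
          rw [if_neg (show ¬some c = some c' from
            fun h' => hc' (Option.some.inj h').symm), add_zero] at h
          have h2 := sc_le_maxScore b c'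
          split_ifs at h <;> omega
      have hsole : ∀ (j : Fin n) (c : Fin m), c ∈ winSet b → b j ≠ some c →
          (u j c : ℚ) ≤ lazyU p u ε j b := by
        intro j c hcW hbjc
        have hdev := hb j (some c)
        rw [lazyU, EU_p_singleton hp hn hu (hWsole j c hcW hbjc), Function.update_self,
          if_neg (show ¬some c = none by simp), add_zero] at hdev
        exact hdev
      have hWerase : ∀ (j : Fin n) (c : Fin m), b j = some c →
          winSet (Function.update b j none) = (winSet b).erase c := by
        intro j c hbjc
        have hcW := hvote j c hbjc
        refine (winSet_eq (s := maxScore b) ?_ ?_ ?_).2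
        · rw [← Finset.card_pos, Finset.card_erase_of_mem hcW]
          omega
        · intro c' hc'
          obtain ⟨hne, hc'W⟩ := Finset.mem_erase.1 hc'
          have h := sc_update b j none c'
          rw [hbjc, if_neg (show ¬some c = some c' from
            fun h' => hne (Option.some.inj h').symm),
            if_neg (show ¬(none : Option (Fin m)) = some c' by simp), add_zero, add_zero] at h
          rw [h]
          exact mem_winSet.1 hc'W
        · intro c' hc'
          have h := sc_update b j none c'
          rw [hbjc, if_neg (show ¬(none : Option (Fin m)) = some c' by simp), add_zero] at h
          by_cases hcc : c' = c
          · rw [hcc] at h ⊢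
            rw [if_pos rfl] at h
            rw [mem_winSet] at hcW
            omega
          · rw [if_neg (show ¬some c = some c' from
              fun h' => hcc (Option.some.inj h').symm), add_zero] at h
            have h2 : c' ∉ winSet b := fun hW' => hc' (Finset.mem_erase.2 ⟨hcc, hW'⟩)
            have h3 := hsc_out c' h2
            omega
      have hFnc : p = pRV u → ∀ cb : Fin m, (∀ i', F i' = cb) → False := by
        intro hpv cb hall
        subst hpv
        have hcbW : cb ∈ winSet b := hall ⟨0, hn⟩ ▸ hF1 ⟨0, hn⟩
        obtain ⟨c, hcW, hcne⟩ := Finset.exists_mem_ne (s := winSet b) (by omega) cb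
        have hscc : 0 < sc b c := by
          rw [mem_winSet.1 hcW]
          omega
        obtain ⟨ic, hic⟩ := Finset.card_pos.1 hscc
        have hbic : b ic = some c := (Finset.mem_filter.1 hic).2
        have hW' := hWerase ic c hbic
        have hcberase : cb ∈ (winSet b).erase c :=
          Finset.mem_erase.2 ⟨fun h => hcne h.symm, hcbW⟩
        have hEU1 := EU_pRV hu (rfl : winSet b = winSet b) F hF1 hF2 (u ic)
        have hEU2 := EU_pRV hu hW' (fun _ => cb) (fun _ => hcberase)
          (fun i c' hc' => by
            have h0 := hF2 i c' (Finset.mem_erase.1 hc').2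
            rw [hall i] at h0
            exact h0) (u ic)
        have hdev := hb ic none
        rw [lazyU, lazyU, hEU2, Function.update_self, if_pos rfl, hbic,
          if_neg (show ¬some c = none by simp), add_zero, hEU1] at hdev
        have hsame : (∑ i, (u ic (F i) : ℚ)) = ∑ _i : Fin n, (u ic cb : ℚ) :=
          Finset.sum_congr rfl (fun i _ => by rw [hall i])
        rw [hsame] at hdev
        linarith
      have hsumF : ∀ (j i' : Fin n), F i' ≠ F j →
          (∑ i, (u j (F i) : ℚ)) ≤ (n:ℚ) * u j (F j) - 1 := by
        intro j i' hi'
        have hterm : ∀ i, (u j (F i) : ℚ) ≤ (u j (F j) : ℚ) - (if i = i' then 1 else 0) := by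
          intro i
          by_cases h : i = i'
          · rw [if_pos h, h]
            exact strict_le (hu j) hi' (hF2 j (F i') (hF1 i'))
          · rw [if_neg h, sub_zero]
            exact_mod_cast hF2 j (F i) (hF1 i)
        have h1 := Finset.sum_le_sum (fun i (_ : i ∈ univ) => hterm i)
        rw [Finset.sum_sub_distrib, Finset.sum_const, Finset.card_univ, Fintype.card_fin,
          nsmul_eq_mul, Finset.sum_boole] at h1
        have h2 : (univ.filter fun i : Fin n => i = i') = {i'} := by
          ext i
          simp
        rw [h2, Finset.card_singleton] at h1
        push_cast at h1
        linarith
      have hnoabs : ∀ j, ∃ c, b j = some c := by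
        intro j
        cases hbj : b j with
        | some c => exact ⟨c, rfl⟩
        | none =>
          exfalso
          have hFjW := hF1 j
          have hsj := hsole j (F j) hFjW (by rw [hbj]; simp)
          rw [lazyU, hbj, if_pos rfl] at hsj
          rcases hp with rfl | rfl
          · rw [EU_pRC (rfl : winSet b = winSet b)] at hsj
            have hbd := sum_lt_max (hu j) hFjW hk2 (hF2 j)
            have h1 : (u j (F j) : ℚ) - ε
                ≤ (∑ c ∈ winSet b, (u j c : ℚ)) / (winSet b).card := by linarith
            have h2 := (le_div_iff₀ hK0).1 h1
            nlinarith [hbd, hKε]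
          · by_cases hex : ∃ i', F i' ≠ F j
            · obtain ⟨i', hi'⟩ := hex
              rw [EU_pRV hu (rfl : winSet b = winSet b) F hF1 hF2] at hsj
              have hsum := hsumF j i' hi'
              have h1 : (u j (F j) : ℚ) - ε ≤ (∑ i, (u j (F i) : ℚ)) / n := by linarith
              have h2 := (le_div_iff₀ hN0).1 h1
              nlinarith [hsum, hNε]
            · push_neg at hex
              exact hFnc rfl (F j) hex
      choose g hg using hnoabs
      have hgW : ∀ j, g j ∈ winSet b := fun j => hvote j (g j) (hg j)
      have hcntg : ∀ c, (univ.filter fun i => g i = c) = (univ.filter fun i => b i = some c) := by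
        intro c
        apply Finset.filter_congr
        intro i _
        rw [hg i]
        simp
      have hcnt : ∀ c ∈ winSet b, (univ.filter fun i => g i = c).card = maxScore b := by
        intro c hc
        rw [hcntg c]
        exact mem_winSet.1 hc
      have hks : (winSet b).card * maxScore b = n := by
        have h1 := Finset.card_eq_sum_card_fiberwise
          (fun (i : Fin n) (_ : i ∈ (univ : Finset (Fin n))) => mem_univ (g i))
        rw [Finset.card_fin] at h1
        have h2 : ∀ c ∈ (univ : Finset (Fin m)), (univ.filter fun i => g i = c).card
            = if c ∈ winSet b then maxScore b else 0 := by
          intro c _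
          by_cases hc : c ∈ winSet b
          · rw [if_pos hc]
            exact hcnt c hc
          · rw [if_neg hc, hcntg c]
            exact hsc_out c hc
        rw [Finset.sum_congr rfl h2, Finset.sum_ite_mem, Finset.univ_inter,
          Finset.sum_const, smul_eq_mul] at h1
        omega
      have hgF : ∀ i, g i = F i := by
        intro i
        by_contra hne
        have hbine : b i ≠ some (F i) := by
          rw [hg i]
          exact fun h => hne (Option.some.inj h)
        have h1 := hsole i (F i) (hF1 i) hbine
        rw [lazyU, hg i, if_neg (show ¬some (g i) = none by simp), add_zero] at h1
        rcases hp with rfl | rfl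
        · rw [EU_pRC (rfl : winSet b = winSet b)] at h1
          have hbd := sum_lt_max (hu i) (hF1 i) hk2 (hF2 i)
          have h2 := (le_div_iff₀ hK0).1 h1
          nlinarith [hbd]
        · by_cases hex : ∃ i', F i' ≠ F i
          · obtain ⟨i', hi'⟩ := hex
            rw [EU_pRV hu (rfl : winSet b = winSet b) F hF1 hF2] at h1
            have hsum := hsumF i i' hi'
            have h2 := (le_div_iff₀ hN0).1 h1
            nlinarith [hsum]
          · push_neg at hex
            exact hFnc rfl (F i) hex
      have hstrictfav : ∀ i, ∀ c ∈ winSet b, c ≠ g i → u i c < u i (g i) := by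
        intro i c hc hne
        rw [hgF i] at hne ⊢
        exact lt_of_le_of_ne (hF2 i c hc) (fun h => hne (hu i h))
      have hg2 : ∀ i, ∀ c ∈ winSet b, u i c ≤ u i (g i) := by
        intro i c hc
        rw [hgF i]
        exact hF2 i c hc
      have hEUb : ∀ ul, EU ul (p b) = (∑ c ∈ winSet b, (ul c : ℚ)) / (winSet b).card :=
        fun ul => EU_p_uniform hp hn hu rfl hgW hg2 hcnt hks ul
      have hlotW : ∀ i, ∀ c ∈ winSet b, c ≠ g i →
          ((winSet b).card : ℚ) * (u i c : ℚ) ≤ ∑ c' ∈ winSet b, (u i c' : ℚ) := by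
        intro i c hc hne
        have h1 := hsole i c hc (by
          rw [hg i]
          exact fun h => hne (Option.some.inj h).symm)
        rw [lazyU, hg i, if_neg (show ¬some (g i) = none by simp), add_zero, hEUb] at h1
        rw [mul_comm]
        exact (le_div_iff₀ hK0).1 h1
      by_cases hs2 : 2 ≤ maxScore b
      · right
        right
        refine ⟨(winSet b).card, winSet b, rfl, hk2, ?_, hkm, g, hgW, ?_, hstrictfav, hlotW⟩
        · calc 2 * (winSet b).card = (winSet b).card * 2 := by ring
          _ ≤ (winSet b).card * maxScore b := Nat.mul_le_mul_left _ hs2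
          _ = n := hks
        · intro c hc
          rw [hcnt c hc, mul_comm]
          exact hks
      · -- maxScore = 1
        have hs1' : maxScore b = 1 := by omega
        have hkn : (winSet b).card = n := by
          have h0 := hks
          rw [hs1', mul_one] at h0
          exact h0
        have hfibg : ∀ i j, g i = g j → i = j := by
          intro i j hij
          have h1 := hcnt (g j) (hgW j)
          rw [hs1'] at h1
          exact Finset.card_le_one.1 (le_of_eq h1) i
            (Finset.mem_filter.2 ⟨mem_univ _, hij⟩) j
            (Finset.mem_filter.2 ⟨mem_univ _, rfl⟩)
        have hag : ∀ i, a i = g i := by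
          intro i
          by_cases haiW : a i ∈ winSet b
          · exact hu i (le_antisymm (hg2 i (a i) haiW) (ha i (g i)))
          · exfalso
            have hanegi : a i ≠ g i := fun h => haiW (h ▸ hgW i)
            have hW' : winSet (Function.update b i (some (a i)))
                = insert (a i) ((winSet b).erase (g i)) := by
              refine (winSet_eq (s := 1) ⟨_, Finset.mem_insert_self _ _⟩ ?_ ?_).2
              · intro c' hc'
                rcases Finset.mem_insert.1 hc' with h' | h'
                · rw [h']
                  have h := sc_update b i (some (a i)) (a i)
                  rw [hg i, if_neg (show ¬some (g i) = some (a i) from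
                    fun h'' => hanegi (Option.some.inj h'').symm), add_zero, if_pos rfl,
                    hsc_out (a i) haiW] at h
                  omega
                · obtain ⟨hne', hc'W⟩ := Finset.mem_erase.1 h'
                  have h := sc_update b i (some (a i)) c'
                  rw [hg i, if_neg (show ¬some (g i) = some c' from
                    fun h'' => hne' (Option.some.inj h'').symm), add_zero,
                    if_neg (show ¬some (a i) = some c' from
                      fun h'' => haiW (by rw [Option.some.inj h'']; exact hc'W)),
                    add_zero] at h
                  rw [h, mem_winSet.1 hc'W, hs1']
              · intro c' hc'
                by_cases hgc : c' = g i
                · rw [hgc]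
                  have h := sc_update b i (some (a i)) (g i)
                  rw [hg i, if_pos rfl, if_neg (show ¬some (a i) = some (g i) from
                    fun h'' => hanegi (Option.some.inj h'')), add_zero,
                    mem_winSet.1 (hgW i), hs1'] at h
                  omega
                · have hc'W : c' ∉ winSet b := fun hW'' =>
                    hc' (Finset.mem_insert_of_mem (Finset.mem_erase.2 ⟨hgc, hW''⟩))
                  have hc'a : c' ≠ a i := fun h'' => hc' (by
                    rw [h'']
                    exact Finset.mem_insert_self _ _)
                  have h := sc_update b i (some (a i)) c'
                  rw [hg i, if_neg (show ¬some (g i) = some c' from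
                    fun h'' => hgc (Option.some.inj h'').symm), add_zero,
                    if_neg (show ¬some (a i) = some c' from
                      fun h'' => hc'a (Option.some.inj h'').symm), add_zero,
                    hsc_out c' hc'W] at h
                  omega
            have hdev := hb i (some (a i))
            rw [lazyU, lazyU, Function.update_self,
              if_neg (show ¬some (a i) = none by simp), add_zero, hg i,
              if_neg (show ¬some (g i) = none by simp), add_zero] at hdev
            have haiWm : a i ∉ (winSet b).erase (g i) :=
              fun h'' => haiW (Finset.mem_erase.1 h'').2
            have hstrict_ai : (u i (g i) : ℚ) ≤ (u i (a i) : ℚ) - 1 :=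
              strict_le (hu i) (fun h => hanegi h.symm) (ha i (g i))
            rcases hp with rfl | rfl
            · rw [EU_pRC hW', EU_pRC (rfl : winSet b = winSet b)] at hdev
              rw [Finset.card_insert_of_notMem haiWm,
                Finset.card_erase_of_mem (hgW i)] at hdev
              have hcard : (winSet b).card - 1 + 1 = (winSet b).card := by omega
              rw [hcard, Finset.sum_insert haiWm] at hdev
              have hsplit := Finset.sum_erase_add (winSet b) (fun c' => (u i c' : ℚ)) (hgW i)
              rw [← hsplit] at hdev
              have h2 := (div_le_div_iff₀ hK0 hK0).1 hdev
              nlinarith [hstrict_ai, hK0]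
            · have hgne : ∀ j, j ≠ i → g j ∈ insert (a i) ((winSet b).erase (g i)) := by
                intro j hj
                exact Finset.mem_insert_of_mem (Finset.mem_erase.2
                  ⟨fun h => hj (hfibg j i h), hgW j⟩)
              set F3 : Fin n → Fin m := fun j =>
                if u j (a i) ≤ u j (g j) then g j else a i with hF3def
              have hF3i : F3 i = a i := by
                show (if u i (a i) ≤ u i (g i) then g i else a i) = a i
                rw [if_neg (fun h =>
                  hanegi (hu i (le_antisymm (ha i (g i)) h)).symm)]
              have hF31 : ∀ j, F3 j ∈ insert (a i) ((winSet b).erase (g i)) := by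
                intro j
                by_cases hj : j = i
                · rw [hj, hF3i]
                  exact Finset.mem_insert_self _ _
                · show (if u j (a i) ≤ u j (g j) then g j else a i) ∈ _
                  by_cases h : u j (a i) ≤ u j (g j)
                  · rw [if_pos h]
                    exact hgne j hj
                  · rw [if_neg h]
                    exact Finset.mem_insert_self _ _
              have hF32 : ∀ j, ∀ c' ∈ insert (a i) ((winSet b).erase (g i)),
                  u j c' ≤ u j (F3 j) := by
                intro j c' hc'
                show u j c' ≤ u j (if u j (a i) ≤ u j (g j) then g j else a i)
                rcases Finset.mem_insert.1 hc' with h' | h'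
                · rw [h']
                  by_cases h : u j (a i) ≤ u j (g j)
                  · rw [if_pos h]
                    exact h
                  · rw [if_neg h]
                · have h'' := hg2 j c' (Finset.mem_erase.1 h').2
                  by_cases h : u j (a i) ≤ u j (g j)
                  · rw [if_pos h]
                    exact h''
                  · rw [if_neg h]
                    omega
              rw [EU_pRV hu hW' F3 hF31 hF32,
                EU_pRV hu (rfl : winSet b = winSet b) g hgW hg2] at hdev
              have hterm : ∀ j, (u i (g j) : ℚ) + (if j = i then 1 else 0)
                  ≤ (u i (F3 j) : ℚ) := by
                intro j
                by_cases hj : j = i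
                · rw [if_pos hj, hj, hF3i]
                  linarith [hstrict_ai]
                · rw [if_neg hj, add_zero]
                  have h0 : F3 j = g j ∨ F3 j = a i := by
                    show (if u j (a i) ≤ u j (g j) then g j else a i) = g j ∨
                      (if u j (a i) ≤ u j (g j) then g j else a i) = a i
                    by_cases h : u j (a i) ≤ u j (g j)
                    · left
                      rw [if_pos h]
                    · right
                      rw [if_neg h]
                  rcases h0 with h' | h'
                  · rw [h']
                  · rw [h']
                    exact_mod_cast ha i (g j)
              have hsum := Finset.sum_le_sum (fun j (_ : j ∈ univ) => hterm j)
              rw [Finset.sum_add_distrib, Finset.sum_boole] at hsum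
              have h2 : (univ.filter fun j : Fin n => j = i) = {i} := by
                ext j
                simp
              rw [h2, Finset.card_singleton] at hsum
              push_cast at hsum
              have h3 := (div_le_div_iff₀ hN0 hN0).1 hdev
              nlinarith [mul_le_mul_of_nonneg_right hsum hN0.le, h3, hN0]
        right
        left
        constructor
        · intro c
          have hfa : (univ.filter fun i => a i = c) = (univ.filter fun i => g i = c) := by
            apply Finset.filter_congr
            intro i _
            rw [hag i]
          rw [hfa, hcntg c]
          have h0 := sc_le_maxScore b c
          rw [hs1'] at h0
          exact h0
        · intro l i hil
          have haiW : a i ∈ winSet b := by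
            rw [hag i]
            exact hgW i
          have hane : a i ≠ g l := by
            rw [hag i]
            exact fun h => hil (hfibg i l h)
          have h1 := hlotW l (a i) haiW hane
          have hcnt1 : ∀ c ∈ winSet b, (univ.filter fun i => g i = c).card = 1 := by
            intro c hc
            rw [hcnt c hc, hs1']
          have h2 := sum_comp hgW hcnt1 (u l)
          rw [hkn] at h1
          have h3 : (∑ i' : Fin n, (u l (a i') : ℚ)) = ∑ j, (u l (g j) : ℚ) :=
            Finset.sum_congr rfl (fun j _ => by rw [hag j])
          rw [h3, h2, Nat.cast_one, one_mul]
          exact h1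

end Forward

theorem stmt7 {n m : ℕ} (hn : 0 < n) (hm : 0 < m)
    (u : Fin n → Fin m → ℕ) (hu : ∀ i, Function.Injective (u i))
    (ε : ℚ) (hε0 : 0 < ε) (hε : ε < min ((m : ℚ)⁻¹) ((n : ℚ)⁻¹))
    (a : Fin n → Fin m) (ha : ∀ i c, u i c ≤ u i (a i))
    (p : Ballot n m → Fin m → ℚ) (hp : p = pRC ∨ p = pRV u) :
    (∃ b : Ballot n m, lazyPNE p u ε b) ↔
      ((∃ c, ∀ i, a i = c) ∨
       ((∀ c : Fin m, (univ.filter fun i => a i = c).card ≤ 1) ∧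
        ∀ l i : Fin n, i ≠ l →
          (n : ℚ) * (u l (a i) : ℚ) ≤ ∑ i' : Fin n, (u l (a i') : ℚ)) ∨
       (∃ (k : ℕ) (X : Finset (Fin m)), X.card = k ∧ 2 ≤ k ∧ 2 * k ≤ n ∧ k ≤ m ∧
        ∃ g : Fin n → Fin m, (∀ i, g i ∈ X) ∧
          (∀ c ∈ X, (univ.filter fun i => g i = c).card * k = n) ∧
          (∀ i, ∀ c ∈ X, c ≠ g i → u i c < u i (g i)) ∧
          (∀ i, ∀ c ∈ X, c ≠ g i →
            (k : ℚ) * (u i c : ℚ) ≤ ∑ c' ∈ X, (u i c' : ℚ)))) := by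
  classical
  constructor
  · rintro ⟨b, hb⟩
    exact pne_forward hn hm u hu ε hε0 hε a ha p hp b hb
  · rintro (⟨c, hc⟩ | ⟨hcard, hineq⟩ | ⟨k, X, hXk, hk2, hkn, hkm, g, hgX, hcnt, hfav, hlot⟩)
    · exact pne_unanimous hn hm u hu ε hε0 hε a ha p hp c hc
    · -- condition (2)
      by_cases hn1 : n = 1
      · refine pne_unanimous hn hm u hu ε hε0 hε a ha p hp (a ⟨0, hn⟩) (fun i => ?_)
        have h0 : i = ⟨0, hn⟩ := by
          apply Fin.ext
          omega
        rw [h0]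
      · have hn2 : 2 ≤ n := by omega
        have hainj : Function.Injective a := by
          intro i j hij
          exact Finset.card_le_one.1 (hcard (a j)) i
            (Finset.mem_filter.2 ⟨mem_univ _, hij⟩) j
            (Finset.mem_filter.2 ⟨mem_univ _, rfl⟩)
        have hcardX : (univ.image a).card = n := by
          rw [Finset.card_image_of_injective _ hainj, Finset.card_fin]
        have hfib : ∀ c ∈ univ.image a, (univ.filter fun i => a i = c).card = 1 := by
          intro c hc
          obtain ⟨i, -, rfl⟩ := Finset.mem_image.1 hc
          have h1 : 0 < (univ.filter fun j => a j = a i).card :=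
            Finset.card_pos.2 ⟨i, Finset.mem_filter.2 ⟨mem_univ _, rfl⟩⟩
          have h2 := hcard (a i)
          omega
        refine ⟨_, master_pne hn hm u hu ε hε0 hε a ha p hp (univ.image a) 1 a
          ?_ le_rfl ?_ ?_ hfib ?_ ?_ (fun _ i => rfl)⟩
        · rw [hcardX]
          exact hn2
        · rw [hcardX, mul_one]
        · intro i
          exact Finset.mem_image_of_mem a (mem_univ i)
        · intro i c hc hne
          exact lt_of_le_of_ne (ha i c) (fun h => hne (hu i h))
        · intro i c hc hne
          obtain ⟨j, -, rfl⟩ := Finset.mem_image.1 hc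
          have hji : j ≠ i := fun h => hne (by rw [h])
          have h1 := hineq i j hji
          have h2 := sum_comp (g := a) (X := univ.image a) (s := 1)
            (fun i' => Finset.mem_image_of_mem a (mem_univ i')) hfib (u i)
          rw [Nat.cast_one, one_mul] at h2
          rw [hcardX, ← h2]
          exact h1
    · -- condition (3)
      subst hXk
      have hX0 : 0 < X.card := by omega
      obtain ⟨c0, hc0⟩ := Finset.card_pos.1 hX0
      have hs_eq : ∀ c ∈ X, (univ.filter fun i => g i = c).card
          = (univ.filter fun i => g i = c0).card := by
        intro c hc
        exact Nat.eq_of_mul_eq_mul_right hX0 ((hcnt c hc).trans (hcnt c0 hc0).symm)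
      have hks : X.card * (univ.filter fun i => g i = c0).card = n := by
        rw [mul_comm]
        exact hcnt c0 hc0
      have hs2 : 2 ≤ (univ.filter fun i => g i = c0).card := by
        by_contra h
        have hs1 : (univ.filter fun i => g i = c0).card ≤ 1 := by omega
        have h1 : X.card * (univ.filter fun i => g i = c0).card ≤ X.card * 1 :=
          Nat.mul_le_mul_left _ hs1
        rw [hks] at h1
        omega
      exact ⟨_, master_pne hn hm u hu ε hε0 hε a ha p hp X
        (univ.filter fun i => g i = c0).card g hk2 (by omega) hks hgX hs_eq hfav hlot
        (fun h1 => absurd h1 (by omega))⟩
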